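/- Let μ be a positive finite Borel measure on ℝ^d satisfying both: (i) liminf_{r→∞} r^{α−d} ∫_{|t|<r} |μ̂(t)|² dt > 0 for some 0 < α ≤ d, and (ii) there exists φ ∈ L²(μ), ‖φ‖ > 0, with |(φμ)^∧(t)| ≤ C|t|^{−β/2} for all t, for some 0 < β ≤ d. If 1/α − 1/β > 1/d, then L²(μ) does not admit any Fourier frame, i.e., there is no countable Λ ⊂ ℝ^d such that E(Λ) is a frame in L²(μ). -/

import Mathlib

open MeasureTheory Complex

noncomputable def fexp {d : ℕ} (l x : EuclideanSpace ℝ (Fin d)) : ℂ :=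
  Complex.exp (((2 * Real.pi * (inner ℝ l x : ℝ) : ℝ) : ℂ) * Complex.I)

noncomputable def fourierM {d : ℕ} (μ : Measure (EuclideanSpace ℝ (Fin d)))
    (t : EuclideanSpace ℝ (Fin d)) : ℂ :=
  ∫ x, Complex.exp ((((-2) * Real.pi * (inner ℝ t x : ℝ) : ℝ) : ℂ) * Complex.I) ∂μ

/-- the system `e i` is a frame in `L²(μ)` with lower bound `A` and upper bound `B`. -/
def IsFrameWith {α : Type*} [MeasurableSpace α] (μ : Measure α)
    {ι : Type*} (e : ι → α → ℂ) (A B : ℝ) : Prop :=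
  ∀ f : α → ℂ, MeasureTheory.MemLp f 2 μ →
    A * ∫ x, ‖f x‖ ^ 2 ∂μ ≤ (∑' i, ‖∫ x, f x * (starRingEnd ℂ) (e i x) ∂μ‖ ^ 2) ∧
    (∑' i, ‖∫ x, f x * (starRingEnd ℂ) (e i x) ∂μ‖ ^ 2) ≤ B * ∫ x, ‖f x‖ ^ 2 ∂μ

/-- `μ` admits a Fourier frame: a countable set `Λ ⊆ ℝ^d` of frequencies such that
the exponential system `E(Λ)` is a frame in `L²(μ)`. -/
def HasFourierFrame {d : ℕ} (μ : Measure (EuclideanSpace ℝ (Fin d))) : Prop :=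
  ∃ Λ : Set (EuclideanSpace ℝ (Fin d)), Λ.Countable ∧
    ∃ A B : ℝ, 0 < A ∧ A ≤ B ∧ IsFrameWith μ (fun l : Λ => fexp (l : EuclideanSpace ℝ (Fin d))) A B

/-!
Testing the frame inequalities on `e_t` and on `e_t φ` turns the frame coefficients into
translates of Fourier transforms: for every `t`,
`∑_λ |μ̂(λ - t)|² ≤ B μ(ℝᵈ)` and `A ‖φ‖² ≤ ∑_λ |(φμ)^(λ - t)|²`.
Integrating the first inequality over the ball of radius `2S` and using the energy bound
`∫_{|t|<S} |μ̂|² ≳ S^(d-α)` shows that `Λ` has `O(S^α)` points in the ball of radius `S`.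
The gap condition gives `α < min β d`, so `|(φμ)^|²`, which is bounded, decays like `|s|^(-γ)`
for some `α < γ < d`. Averaging the second inequality over the ball of radius `R` then gives
`A ‖φ‖² |B_R| ≲ ∑_λ R^d (R + |λ|)^(-γ) ≲ R^(d+α-γ)` by a dyadic count, which is `o(R^d)`.
-/

open Metric Filter Topology Module
open scoped ENNReal Real InnerProductSpace FourierTransform ComplexConjugate

theorem exists_mul_rpow_le_of_liminf_pos {I : ℝ → ℝ} (hI : ∀ r, 0 ≤ I r) {e : ℝ}
    (h : 0 < liminf (fun r => r ^ e * I r) atTop) :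
    ∃ c > 0, ∃ r₀ > 0, ∀ r ≥ r₀, c * r ^ (-e) ≤ I r := by
  have hbdd : IsBoundedUnder (· ≥ ·) atTop fun r => r ^ e * I r :=
    isBoundedUnder_of_eventually_ge ((eventually_ge_atTop 0).mono fun r hr =>
      mul_nonneg (Real.rpow_nonneg hr e) (hI r))
  obtain ⟨r₁, hr₁⟩ := eventually_atTop.1 (eventually_lt_of_lt_liminf (half_lt_self h) hbdd)
  refine ⟨_, half_pos h, max r₁ 1, by positivity, fun r hr => ?_⟩
  have hr0 : 0 < r := zero_lt_one.trans_le (le_of_max_le_right hr)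
  calc _ ≤ r ^ e * I r * r ^ (-e) :=
        mul_le_mul_of_nonneg_right (hr₁ r (le_of_max_le_left hr)).le (by positivity)
    _ = I r := by rw [mul_right_comm, ← Real.rpow_add hr0, add_neg_cancel, Real.rpow_zero, one_mul]

theorem sq_le_mul_rpow_neg {y M C r β γ : ℝ} (hy : 0 ≤ y) (hyM : y ≤ M)
    (hyC : y ≤ C * r ^ (-(β / 2))) (hr : 0 < r) (hγ : 0 ≤ γ) (hγβ : γ ≤ β) :
    y ^ 2 ≤ (M ^ 2 + C ^ 2) * r ^ (-γ) := by
  rcases le_or_gt 1 r with h1 | h1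
  · have hsq : y ^ 2 ≤ C ^ 2 * r ^ (-β) := by
      calc y ^ 2 ≤ (C * r ^ (-(β / 2))) ^ 2 := pow_le_pow_left₀ hy hyC 2
        _ = C ^ 2 * r ^ (-β) := by
          rw [mul_pow, ← Real.rpow_mul_natCast hr.le]
          norm_num
    have hmono : r ^ (-β) ≤ r ^ (-γ) := Real.rpow_le_rpow_of_exponent_le h1 (by linarith)
    nlinarith [sq_nonneg M, sq_nonneg C, Real.rpow_nonneg hr.le (-γ)]
  · have hone : 1 ≤ r ^ (-γ) :=
      Real.one_le_rpow_of_pos_of_le_one_of_nonpos hr h1.le (neg_nonpos.2 hγ)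
    nlinarith [pow_le_pow_left₀ hy hyM 2, sq_nonneg M, sq_nonneg C]

theorem ofReal_setIntegral_sq_norm_le {X F : Type*} [MeasurableSpace X] [NormedAddCommGroup F]
    (ν : Measure X) (s : Set X) (f : X → F) :
    ENNReal.ofReal (∫ t in s, ‖f t‖ ^ 2 ∂ν) ≤ ∫⁻ t in s, ‖f t‖ₑ ^ 2 ∂ν := by
  rw [← Real.enorm_of_nonneg (integral_nonneg fun t => by positivity)]
  refine (enorm_integral_le_lintegral_enorm _).trans_eq ?_
  simp [enorm_pow]

section Counting

variable {E : Type*} [NormedAddCommGroup E] {ι : Type*}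

noncomputable def countInBall (x : ι → E) (S : ℝ) : ℝ≥0∞ :=
  ∑' i, (ball (0 : E) S).indicator 1 (x i)

theorem ofReal_rpow_neg_le_tsum_indicator {R γ : ℝ} (hR : 0 < R) (hγ : 0 ≤ γ) (y : E) :
    ENNReal.ofReal ((R + ‖y‖) ^ (-γ)) ≤ ∑' k : ℕ, (ball (0 : E) (2 ^ k * R)).indicator
      (fun _ => ENNReal.ofReal (2 ^ γ * (2 ^ k * R) ^ (-γ))) y := by
  classical
  have hex : ∃ k : ℕ, ‖y‖ < 2 ^ k * R := by
    obtain ⟨k, hk⟩ := pow_unbounded_of_one_lt (‖y‖ / R) one_lt_two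
    exact ⟨k, (div_lt_iff₀ hR).1 hk⟩
  set k := Nat.find hex
  have hk : 2 ^ k * R ≤ 2 * (R + ‖y‖) := by
    rcases Nat.eq_zero_or_pos k with h0 | hpos
    · rw [h0, pow_zero, one_mul]
      linarith [norm_nonneg y]
    · have hmin := Nat.find_min hex (Nat.sub_lt hpos one_pos)
      have hpow : (2 : ℝ) ^ k = 2 * 2 ^ (k - 1) := by rw [← pow_succ']; congr; omega
      rw [not_lt] at hmin
      rw [hpow]
      linarith
  refine le_trans ?_ (ENNReal.le_tsum k)
  rw [Set.indicator_of_mem (mem_ball_zero_iff.2 (Nat.find_spec hex))]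
  refine ENNReal.ofReal_le_ofReal ?_
  calc (R + ‖y‖) ^ (-γ) ≤ (2 ^ k * R / 2) ^ (-γ) :=
        Real.rpow_le_rpow_of_nonpos (by positivity) (by linarith) (neg_nonpos.2 hγ)
    _ = 2 ^ γ * (2 ^ k * R) ^ (-γ) := by
        rw [Real.div_rpow (by positivity) zero_le_two, Real.rpow_neg zero_le_two, div_inv_eq_mul,
          mul_comm]

theorem exists_tsum_ofReal_rpow_neg_le {x : ι → E} {K α γ r₀ : ℝ} (hK : 0 ≤ K) (hr₀ : 0 < r₀)
    (hcount : ∀ S ≥ r₀, countInBall x S ≤ ENNReal.ofReal (K * S ^ α)) (hγ : 0 ≤ γ)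
    (hαγ : α < γ) :
    ∃ c, 0 ≤ c ∧ ∀ R ≥ r₀, ∑' i, ENNReal.ofReal ((R + ‖x i‖) ^ (-γ)) ≤
      ENNReal.ofReal (c * R ^ (α - γ)) := by
  set ρ : ℝ := 2 ^ (α - γ)
  have hρ0 : 0 ≤ ρ := by positivity
  have hρ1 : ρ < 1 := Real.rpow_lt_one_of_one_lt_of_neg one_lt_two (by linarith)
  refine ⟨2 ^ γ * K / (1 - ρ), div_nonneg (by positivity) (by linarith), fun R hR => ?_⟩
  have hR0 : 0 < R := hr₀.trans_le hR
  have hterm (k : ℕ) : 2 ^ γ * (2 ^ k * R) ^ (-γ) * (K * (2 ^ k * R) ^ α) =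
      2 ^ γ * K * R ^ (α - γ) * ρ ^ k := by
    calc 2 ^ γ * (2 ^ k * R) ^ (-γ) * (K * (2 ^ k * R) ^ α)
        = 2 ^ γ * K * ((2 ^ k * R) ^ α * (2 ^ k * R) ^ (-γ)) := by ring
      _ = 2 ^ γ * K * (((2 : ℝ) ^ k) ^ (α - γ) * R ^ (α - γ)) := by
        rw [← Real.rpow_add (by positivity), ← sub_eq_add_neg, Real.mul_rpow (by positivity) hR0.le]
      _ = 2 ^ γ * K * R ^ (α - γ) * ρ ^ k := by
        rw [Real.rpow_pow_comm zero_le_two]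
        ring
  calc ∑' i, ENNReal.ofReal ((R + ‖x i‖) ^ (-γ))
      ≤ ∑' i, ∑' k : ℕ, (ball (0 : E) (2 ^ k * R)).indicator
          (fun _ => ENNReal.ofReal (2 ^ γ * (2 ^ k * R) ^ (-γ))) (x i) :=
        ENNReal.tsum_le_tsum fun i => ofReal_rpow_neg_le_tsum_indicator hR0 hγ (x i)
    _ = ∑' k : ℕ, ENNReal.ofReal (2 ^ γ * (2 ^ k * R) ^ (-γ)) * countInBall x (2 ^ k * R) := by
        rw [ENNReal.tsum_comm]
        refine tsum_congr fun k => ?_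
        rw [countInBall, ← ENNReal.tsum_mul_left]
        refine tsum_congr fun i => ?_
        by_cases hi : x i ∈ ball (0 : E) (2 ^ k * R) <;> simp [hi]
    _ ≤ ∑' k : ℕ, ENNReal.ofReal (2 ^ γ * (2 ^ k * R) ^ (-γ)) *
          ENNReal.ofReal (K * (2 ^ k * R) ^ α) := by
        gcongr with k
        exact hcount _ (hR.trans (le_mul_of_one_le_left hR0.le (one_le_pow₀ one_le_two)))
    _ = ENNReal.ofReal (∑' k : ℕ, 2 ^ γ * K * R ^ (α - γ) * ρ ^ k) := by
        rw [ENNReal.ofReal_tsum_of_nonneg (fun k => by positivity)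
          ((summable_geometric_of_lt_one hρ0 hρ1).mul_left _)]
        refine tsum_congr fun k => ?_
        rw [← ENNReal.ofReal_mul (by positivity), hterm]
    _ = ENNReal.ofReal (2 ^ γ * K / (1 - ρ) * R ^ (α - γ)) := by
        rw [tsum_mul_left, tsum_geometric_of_lt_one hρ0 hρ1]
        ring_nf

end Counting

section AddHaar

variable {E : Type*} [NormedAddCommGroup E] [NormedSpace ℝ E] [FiniteDimensional ℝ E]
  [MeasurableSpace E] [BorelSpace E] {μ : Measure E} [μ.IsAddHaarMeasure] {ι : Type*}

theorem setLIntegral_ball_comp_sub (F : E → ℝ≥0∞) (x : E) (r : ℝ) :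
    ∫⁻ t in ball 0 r, F (x - t) ∂μ = ∫⁻ s in ball x r, F s ∂μ := by
  have hpre : (fun t => x - t) ⁻¹' ball x r = ball 0 r := by
    ext t; simp [dist_eq_norm]
  rw [← hpre]
  exact (Measure.measurePreserving_sub_left μ x).setLIntegral_comp_preimage_emb
    (measurableEmbedding_subLeft x) F _

theorem countInBall_mul_setLIntegral_le [Countable ι] {F : E → ℝ≥0∞} (hF : Measurable F)
    {B : ℝ≥0∞} (x : ι → E) (hB : ∀ t, ∑' i, F (x i - t) ≤ B) (S : ℝ) :
    countInBall x S * ∫⁻ s in ball 0 S, F s ∂μ ≤ B * μ (ball 0 (2 * S)) := by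
  calc countInBall x S * ∫⁻ s in ball 0 S, F s ∂μ
      = ∑' i, (ball (0 : E) S).indicator 1 (x i) * ∫⁻ s in ball 0 S, F s ∂μ :=
        ENNReal.tsum_mul_right.symm
    _ ≤ ∑' i, ∫⁻ t in ball 0 (2 * S), F (x i - t) ∂μ := by
        refine ENNReal.tsum_le_tsum fun i => ?_
        by_cases hi : x i ∈ ball 0 S
        · rw [Set.indicator_of_mem hi, Pi.one_apply, one_mul, setLIntegral_ball_comp_sub]
          refine lintegral_mono_set (ball_subset_ball' ?_)
          rw [mem_ball_zero_iff] at hi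
          rw [dist_zero_left]
          linarith
        · simp [hi]
    _ = ∫⁻ t in ball 0 (2 * S), ∑' i, F (x i - t) ∂μ :=
        (lintegral_tsum fun i => (hF.comp (measurable_const.sub measurable_id)).aemeasurable).symm
    _ ≤ ∫⁻ _ in ball 0 (2 * S), B ∂μ := lintegral_mono fun t => hB t
    _ = B * μ (ball 0 (2 * S)) := setLIntegral_const _ _

theorem exists_countInBall_le [Countable ι] {F : E → ℝ≥0∞} (hF : Measurable F) {B : ℝ}
    (hB0 : 0 ≤ B) (x : ι → E) (hB : ∀ t, ∑' i, F (x i - t) ≤ ENNReal.ofReal B)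
    {α c r₀ : ℝ} (hc : 0 < c) (hr₀ : 0 < r₀)
    (henergy : ∀ S ≥ r₀, ENNReal.ofReal (c * S ^ ((finrank ℝ E : ℝ) - α)) ≤
      ∫⁻ s in ball 0 S, F s ∂μ) :
    ∃ K, 0 ≤ K ∧ ∀ S ≥ r₀, countInBall x S ≤ ENNReal.ofReal (K * S ^ α) := by
  refine ⟨B * 2 ^ finrank ℝ E * μ.real (ball 0 1) / c, by positivity, fun S hS => ?_⟩
  have hS0 : 0 < S := hr₀.trans_le hS
  have hpos : 0 < c * S ^ ((finrank ℝ E : ℝ) - α) := by positivity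
  have hcount := (mul_le_mul_right (henergy S hS) _).trans
    (countInBall_mul_setLIntegral_le hF x hB S)
  rw [Measure.addHaar_ball_of_pos μ 0 (by positivity), ← ofReal_measureReal measure_ball_lt_top.ne,
    ← ENNReal.ofReal_mul (by positivity), ← ENNReal.ofReal_mul hB0] at hcount
  refine (ENNReal.mul_le_mul_iff_left (ENNReal.ofReal_pos.2 hpos).ne' ENNReal.ofReal_ne_top).1
    (hcount.trans_eq ?_)
  rw [← ENNReal.ofReal_mul (by positivity)]
  congr 1
  have hsplit : S ^ finrank ℝ E = S ^ α * S ^ ((finrank ℝ E : ℝ) - α) := by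
    rw [← Real.rpow_add hS0, add_sub_cancel, Real.rpow_natCast]
  rw [mul_pow, hsplit]
  field_simp

theorem setIntegral_ball_norm_rpow (p : ℝ) {R : ℝ} (hR : 0 < R) :
    ∫ s in ball (0 : E) R, ‖s‖ ^ p ∂μ =
      R ^ ((finrank ℝ E : ℝ) + p) * ∫ s in ball (0 : E) 1, ‖s‖ ^ p ∂μ := by
  have h := Measure.setIntegral_comp_smul_of_pos μ (fun s : E => ‖s‖ ^ p) (ball 0 1) hR
  simp only [norm_smul, Real.norm_of_nonneg hR.le, Real.mul_rpow hR.le (norm_nonneg _),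
    integral_const_mul, smul_unitBall hR.ne', smul_eq_mul] at h
  rw [Real.rpow_add hR, Real.rpow_natCast, mul_assoc, h, ← mul_assoc,
    mul_inv_cancel₀ (by positivity), one_mul]

theorem exists_setLIntegral_ball_le [Nontrivial E] {G : E → ℝ≥0∞} {C γ : ℝ} (hC : 0 ≤ C)
    (hγ : γ < finrank ℝ E) (hG : ∀ s ≠ 0, G s ≤ ENNReal.ofReal (C * ‖s‖ ^ (-γ))) :
    ∃ c, 0 ≤ c ∧ ∀ R > 0, ∫⁻ s in ball 0 R, G s ∂μ ≤
      ENNReal.ofReal (c * R ^ ((finrank ℝ E : ℝ) - γ)) := by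
  have hint (R : ℝ) : IntegrableOn (fun s : E => C * ‖s‖ ^ (-γ)) (ball 0 R) μ :=
    (integrableOn_ball_of_norm_le_rpow finrank_pos hγ (C := 1)
      (.of_forall fun s => by rw [one_mul, Real.norm_of_nonneg (by positivity)])
      (measurable_norm.pow_const _).aestronglyMeasurable).const_mul C
  refine ⟨C * ∫ s in ball (0 : E) 1, ‖s‖ ^ (-γ) ∂μ,
    mul_nonneg hC (setIntegral_nonneg measurableSet_ball fun s _ => by positivity),
    fun R hR => ?_⟩
  calc ∫⁻ s in ball 0 R, G s ∂μ
      ≤ ∫⁻ s in ball 0 R, ENNReal.ofReal (C * ‖s‖ ^ (-γ)) ∂μ :=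
        lintegral_mono_ae ((ae_restrict_of_ae (Measure.ae_ne μ 0)).mono fun s hs => hG s hs)
    _ = ENNReal.ofReal (∫ s in ball 0 R, C * ‖s‖ ^ (-γ) ∂μ) :=
        (ofReal_integral_eq_lintegral_ofReal (hint R) (.of_forall fun s => by positivity)).symm
    _ = ENNReal.ofReal (C * (∫ s in ball (0 : E) 1, ‖s‖ ^ (-γ) ∂μ) *
          R ^ ((finrank ℝ E : ℝ) - γ)) := by
        rw [integral_const_mul, setIntegral_ball_norm_rpow _ hR, sub_eq_add_neg]
        ring_nf

theorem exists_setLIntegral_ball_comp_sub_le [Nontrivial E] {G : E → ℝ≥0∞} {C γ : ℝ}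
    (hC : 0 ≤ C) (hγ0 : 0 ≤ γ) (hγ : γ < finrank ℝ E)
    (hG : ∀ s ≠ 0, G s ≤ ENNReal.ofReal (C * ‖s‖ ^ (-γ))) :
    ∃ c, 0 ≤ c ∧ ∀ R > 0, ∀ x : E, ∫⁻ t in ball 0 R, G (x - t) ∂μ ≤
      ENNReal.ofReal (c * R ^ finrank ℝ E * (R + ‖x‖) ^ (-γ)) := by
  obtain ⟨c₀, hc₀, hball⟩ := exists_setLIntegral_ball_le (μ := μ) hC hγ hG
  set v := μ.real (ball (0 : E) 1) with hv
  refine ⟨c₀ * 3 ^ finrank ℝ E + C * 3 ^ γ * v, by positivity, fun R hR x => ?_⟩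
  have hRx : 0 < R + ‖x‖ := by positivity
  rw [setLIntegral_ball_comp_sub]
  by_cases hx : ‖x‖ ≤ 2 * R
  · calc ∫⁻ s in ball x R, G s ∂μ ≤ ∫⁻ s in ball 0 (3 * R), G s ∂μ :=
          lintegral_mono_set (ball_subset_ball' (by rw [dist_zero_right]; linarith))
      _ ≤ ENNReal.ofReal (c₀ * (3 * R) ^ ((finrank ℝ E : ℝ) - γ)) := hball _ (by positivity)
      _ ≤ ENNReal.ofReal ((c₀ * 3 ^ finrank ℝ E + C * 3 ^ γ * v) * R ^ finrank ℝ E *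
            (R + ‖x‖) ^ (-γ)) := by
          refine ENNReal.ofReal_le_ofReal ?_
          rw [Real.rpow_sub (by positivity), Real.rpow_natCast, div_eq_mul_inv,
            ← Real.rpow_neg (by positivity), mul_pow]
          have hmono : (3 * R) ^ (-γ) ≤ (R + ‖x‖) ^ (-γ) :=
            Real.rpow_le_rpow_of_nonpos hRx (by linarith) (neg_nonpos.2 hγ0)
          have : 0 ≤ C * 3 ^ γ * v * R ^ finrank ℝ E * (R + ‖x‖) ^ (-γ) := by positivity
          nlinarith [mul_le_mul_of_nonneg_left hmono
            (by positivity : 0 ≤ c₀ * 3 ^ finrank ℝ E * R ^ finrank ℝ E)]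
  · have hfar : ∀ s ∈ ball x R, G s ≤ ENNReal.ofReal (C * 3 ^ γ * (R + ‖x‖) ^ (-γ)) := by
      intro s hs
      have hs' : (R + ‖x‖) / 3 ≤ ‖s‖ := by
        rw [mem_ball, dist_eq_norm] at hs
        linarith [norm_sub_norm_le x s, norm_sub_rev s x]
      refine (hG s (norm_pos_iff.1 ((by positivity : (0 : ℝ) < (R + ‖x‖) / 3).trans_le hs'))).trans
        (ENNReal.ofReal_le_ofReal ?_)
      calc C * ‖s‖ ^ (-γ) ≤ C * ((R + ‖x‖) / 3) ^ (-γ) :=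
            mul_le_mul_of_nonneg_left
              (Real.rpow_le_rpow_of_nonpos (by positivity) hs' (neg_nonpos.2 hγ0)) hC
        _ = C * 3 ^ γ * (R + ‖x‖) ^ (-γ) := by
            rw [Real.div_rpow hRx.le (by norm_num), Real.rpow_neg (by norm_num : (0 : ℝ) ≤ 3),
              div_inv_eq_mul]
            ring
    calc ∫⁻ s in ball x R, G s ∂μ
        ≤ ∫⁻ _ in ball x R, ENNReal.ofReal (C * 3 ^ γ * (R + ‖x‖) ^ (-γ)) ∂μ :=
          setLIntegral_mono' measurableSet_ball hfar
      _ = ENNReal.ofReal (C * 3 ^ γ * v * R ^ finrank ℝ E * (R + ‖x‖) ^ (-γ)) := by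
          rw [setLIntegral_const, Measure.addHaar_ball_of_pos μ x hR,
            ← ofReal_measureReal measure_ball_lt_top.ne, ← ENNReal.ofReal_mul (by positivity),
            ← ENNReal.ofReal_mul (by positivity), ← hv]
          ring_nf
      _ ≤ ENNReal.ofReal ((c₀ * 3 ^ finrank ℝ E + C * 3 ^ γ * v) * R ^ finrank ℝ E *
            (R + ‖x‖) ^ (-γ)) := by
          refine ENNReal.ofReal_le_ofReal ?_
          have : 0 ≤ c₀ * 3 ^ finrank ℝ E * R ^ finrank ℝ E * (R + ‖x‖) ^ (-γ) := by positivity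
          nlinarith

theorem not_forall_le_tsum_comp_sub [Nontrivial E] [Countable ι] {x : ι → E}
    {K α r₀ : ℝ} (hK : 0 ≤ K) (hr₀ : 0 < r₀)
    (hcount : ∀ S ≥ r₀, countInBall x S ≤ ENNReal.ofReal (K * S ^ α))
    {G : E → ℝ≥0∞} (hGm : Measurable G) {C γ : ℝ} (hC : 0 ≤ C) (hγ0 : 0 ≤ γ) (hαγ : α < γ)
    (hγ : γ < finrank ℝ E) (hG : ∀ s ≠ 0, G s ≤ ENNReal.ofReal (C * ‖s‖ ^ (-γ)))
    {a : ℝ} (ha : 0 < a) : ¬ ∀ t, ENNReal.ofReal a ≤ ∑' i, G (x i - t) := by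
  intro hlow
  let μ : Measure E := Measure.addHaar
  obtain ⟨c₁, hc₁, hconv⟩ := exists_setLIntegral_ball_comp_sub_le (μ := μ) hC hγ0 hγ hG
  obtain ⟨c₂, hc₂, hsum⟩ := exists_tsum_ofReal_rpow_neg_le hK hr₀ hcount hγ0 hαγ
  set v := μ.real (ball (0 : E) 1) with hv
  have hv0 : 0 < v := ENNReal.toReal_pos (measure_ball_pos μ 0 one_pos).ne' measure_ball_lt_top.ne
  have hbound : ∀ R ≥ r₀, a * v ≤ c₁ * c₂ * R ^ (α - γ) := by
    intro R hR
    have hR0 : 0 < R := hr₀.trans_le hR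
    have hpow : 0 < R ^ finrank ℝ E := by positivity
    have h : ENNReal.ofReal (a * v * R ^ finrank ℝ E) ≤
        ENNReal.ofReal (c₁ * c₂ * R ^ (α - γ) * R ^ finrank ℝ E) :=
      calc ENNReal.ofReal (a * v * R ^ finrank ℝ E)
          = ∫⁻ _ in ball 0 R, ENNReal.ofReal a ∂μ := by
            rw [setLIntegral_const, Measure.addHaar_ball_of_pos μ 0 hR0,
              ← ofReal_measureReal measure_ball_lt_top.ne, ← hv,
              ← ENNReal.ofReal_mul (by positivity), ← ENNReal.ofReal_mul ha.le]
            ring_nf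
        _ ≤ ∫⁻ t in ball 0 R, ∑' i, G (x i - t) ∂μ := lintegral_mono hlow
        _ = ∑' i, ∫⁻ t in ball 0 R, G (x i - t) ∂μ :=
            lintegral_tsum fun i => (hGm.comp (measurable_const.sub measurable_id)).aemeasurable
        _ ≤ ∑' i, ENNReal.ofReal (c₁ * R ^ finrank ℝ E) *
              ENNReal.ofReal ((R + ‖x i‖) ^ (-γ)) := by
            refine ENNReal.tsum_le_tsum fun i => (hconv R hR0 (x i)).trans_eq ?_
            rw [ENNReal.ofReal_mul (by positivity)]
        _ ≤ ENNReal.ofReal (c₁ * R ^ finrank ℝ E) * ENNReal.ofReal (c₂ * R ^ (α - γ)) := by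
            rw [ENNReal.tsum_mul_left]
            gcongr
            exact hsum R hR
        _ = ENNReal.ofReal (c₁ * c₂ * R ^ (α - γ) * R ^ finrank ℝ E) := by
            rw [← ENNReal.ofReal_mul (by positivity)]
            ring_nf
    rw [ENNReal.ofReal_le_ofReal_iff (by positivity)] at h
    exact le_of_mul_le_mul_right h hpow
  have hlim : Tendsto (fun R : ℝ => c₁ * c₂ * R ^ (α - γ)) atTop (𝓝 0) := by
    simpa [neg_sub] using (tendsto_rpow_neg_atTop (sub_pos.2 hαγ)).const_mul (c₁ * c₂)
  have : a * v ≤ 0 := ge_of_tendsto hlim (eventually_atTop.2 ⟨r₀, hbound⟩)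
  nlinarith [mul_pos ha hv0]

end AddHaar

section FourierFrame

variable {d : ℕ}

local notation "ℝᵈ" => EuclideanSpace ℝ (Fin d)

local notation "𝓕[" μ "]" => VectorFourier.fourierIntegral 𝐞 μ (innerₗ _)

theorem norm_fexp (l x : ℝᵈ) : ‖fexp l x‖ = 1 := Complex.norm_exp_ofReal_mul_I _

theorem continuous_fexp (l : ℝᵈ) : Continuous (fexp l) := by
  unfold fexp; fun_prop

theorem fexp_mul_conj_fexp (t l x : ℝᵈ) :
    fexp t x * conj (fexp l x) = exp (↑(-2 * π * ⟪x, l - t⟫_ℝ) * I) := by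
  unfold fexp
  rw [← exp_conj, map_mul, conj_I, conj_ofReal, ← exp_add, inner_sub_right, real_inner_comm l x,
    real_inner_comm t x]
  push_cast
  ring_nf

theorem integral_exp_mul_eq_fourierIntegral (μ : Measure ℝᵈ) (φ : ℝᵈ → ℂ) (t : ℝᵈ) :
    ∫ x, exp (↑((-2) * π * ⟪t, x⟫_ℝ) * I) * φ x ∂μ = 𝓕[μ] φ t := by
  simp [Real.vector_fourierIntegral_eq_integral_exp_smul, real_inner_comm]

theorem fourierM_eq_fourierIntegral (μ : Measure ℝᵈ) : fourierM μ = 𝓕[μ] (fun _ => 1) := by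
  ext t
  have h := integral_exp_mul_eq_fourierIntegral μ (fun _ => 1) t
  simp only [mul_one] at h
  exact h

theorem continuous_fourierIntegral_inner {μ : Measure ℝᵈ} {φ : ℝᵈ → ℂ} (hφ : Integrable φ μ) :
    Continuous (𝓕[μ] φ) :=
  VectorFourier.fourierIntegral_continuous Real.continuous_fourierChar
    (by simpa using continuous_inner) hφ

theorem continuous_fourierM (μ : Measure ℝᵈ) [IsFiniteMeasure μ] : Continuous (fourierM μ) := by
  rw [fourierM_eq_fourierIntegral]
  exact continuous_fourierIntegral_inner (integrable_const 1)

theorem exists_ofReal_mul_rpow_le_lintegral_fourierM {μ : Measure ℝᵈ} {α : ℝ}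
    (hlim : 0 < liminf (fun r : ℝ => r ^ (α - d) * ∫ t in ball 0 r, ‖fourierM μ t‖ ^ 2) atTop) :
    ∃ c > 0, ∃ r₀ > 0, ∀ S ≥ r₀,
      ENNReal.ofReal (c * S ^ ((d : ℝ) - α)) ≤ ∫⁻ t in ball 0 S, ‖fourierM μ t‖ₑ ^ 2 := by
  obtain ⟨c, hc, r₀, hr₀, henergy⟩ :=
    exists_mul_rpow_le_of_liminf_pos (fun r => integral_nonneg fun t => by positivity) hlim
  refine ⟨c, hc, r₀, hr₀, fun S hS => ?_⟩
  rw [← neg_sub]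
  exact (ENNReal.ofReal_le_ofReal (henergy S hS)).trans (ofReal_setIntegral_sq_norm_le _ _ _)

theorem enorm_sq_fourierIntegral_le {μ : Measure ℝᵈ} {φ : ℝᵈ → ℂ} {C β γ : ℝ}
    (hdecay : ∀ t : ℝᵈ, t ≠ 0 →
      ‖∫ x, exp (↑((-2) * π * ⟪t, x⟫_ℝ) * I) * φ x ∂μ‖ ≤ C * ‖t‖ ^ (-(β / 2)))
    (hγ : 0 ≤ γ) (hγβ : γ ≤ β) (s : ℝᵈ) (hs : s ≠ 0) :
    ‖𝓕[μ] φ s‖ₑ ^ 2 ≤ ENNReal.ofReal (((∫ x, ‖φ x‖ ∂μ) ^ 2 + C ^ 2) * ‖s‖ ^ (-γ)) := by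
  rw [← ofReal_norm, ← ENNReal.ofReal_pow (norm_nonneg _)]
  refine ENNReal.ofReal_le_ofReal (sq_le_mul_rpow_neg (norm_nonneg _)
    (VectorFourier.norm_fourierIntegral_le_integral_norm _ _ _ _ _) ?_ (norm_pos_iff.2 hs) hγ hγβ)
  rw [← integral_exp_mul_eq_fourierIntegral]
  exact hdecay s hs

theorem IsFrameWith.translate_bounds {μ : Measure ℝᵈ} {Λ : Set ℝᵈ} {A B : ℝ}
    (h : IsFrameWith μ (fun l : Λ => fexp (l : ℝᵈ)) A B) {φ : ℝᵈ → ℂ} (hφ : MemLp φ 2 μ)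
    (hpos : 0 < A * ∫ x, ‖φ x‖ ^ 2 ∂μ) (t : ℝᵈ) :
    ENNReal.ofReal (A * ∫ x, ‖φ x‖ ^ 2 ∂μ) ≤ ∑' l : Λ, ‖𝓕[μ] φ (l - t)‖ₑ ^ 2 ∧
      ∑' l : Λ, ‖𝓕[μ] φ (l - t)‖ₑ ^ 2 ≤ ENNReal.ofReal (B * ∫ x, ‖φ x‖ ^ 2 ∂μ) := by
  have hnorm (x : ℝᵈ) : ‖fexp t x * φ x‖ = ‖φ x‖ := by rw [norm_mul, norm_fexp, one_mul]
  have hcoef (l : Λ) : ∫ x, fexp t x * φ x * conj (fexp l x) ∂μ = 𝓕[μ] φ (l - t) := by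
    simp_rw [Real.vector_fourierIntegral_eq_integral_exp_smul, mul_right_comm _ (φ _),
      fexp_mul_conj_fexp, smul_eq_mul, innerₗ_apply_apply]
  have hmem : MemLp (fun x => fexp t x * φ x) 2 μ :=
    hφ.of_le ((continuous_fexp t).aestronglyMeasurable.mul hφ.1) (.of_forall fun x => (hnorm x).le)
  obtain ⟨hlow, hup⟩ := h _ hmem
  simp only [hnorm, hcoef] at hlow hup
  have hsum : Summable fun l : Λ => ‖𝓕[μ] φ (l - t)‖ ^ 2 := by
    by_contra hns
    rw [tsum_eq_zero_of_not_summable hns] at hlow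
    linarith
  have hcast : ∑' l : Λ, ‖𝓕[μ] φ (l - t)‖ₑ ^ 2 =
      ENNReal.ofReal (∑' l : Λ, ‖𝓕[μ] φ (l - t)‖ ^ 2) := by
    rw [ENNReal.ofReal_tsum_of_nonneg (fun _ => by positivity) hsum]
    simp [ENNReal.ofReal_pow, ofReal_norm]
  rw [hcast]
  exact ⟨ENNReal.ofReal_le_ofReal hlow, ENNReal.ofReal_le_ofReal hup⟩

theorem IsFrameWith.tsum_enorm_sq_fourierM_le {μ : Measure ℝᵈ} [IsFiniteMeasure μ] (hμ : μ ≠ 0)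
    {Λ : Set ℝᵈ} {A B : ℝ} (h : IsFrameWith μ (fun l : Λ => fexp (l : ℝᵈ)) A B) (hA : 0 < A)
    (t : ℝᵈ) : ∑' l : Λ, ‖fourierM μ (l - t)‖ₑ ^ 2 ≤ ENNReal.ofReal (B * μ.real Set.univ) := by
  have hμ' : 0 < μ.real Set.univ :=
    ENNReal.toReal_pos (Measure.measure_univ_ne_zero.2 hμ) (measure_ne_top μ _)
  simpa [fourierM_eq_fourierIntegral] using
    (h.translate_bounds (memLp_const 1) (by simpa using mul_pos hA hμ') t).2

end FourierFrame

theorem no_fourier_frame_of_mixed_dimensions_general {d : ℕ}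
    (μ : Measure (EuclideanSpace ℝ (Fin d))) [IsFiniteMeasure μ]
    (α β : ℝ) (hα0 : 0 < α) (hαd : α ≤ (d : ℝ)) (hβ0 : 0 < β)
    (hlim : 0 < Filter.liminf (fun r : ℝ =>
      r ^ (α - (d : ℝ)) * ∫ t in Metric.ball (0 : EuclideanSpace ℝ (Fin d)) r,
        ‖fourierM μ t‖ ^ 2) Filter.atTop)
    (C : ℝ)
    (hdecay : ∃ φ : EuclideanSpace ℝ (Fin d) → ℂ, MeasureTheory.MemLp φ 2 μ ∧
      (0 < ∫ x, ‖φ x‖ ^ 2 ∂μ) ∧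
      ∀ t : EuclideanSpace ℝ (Fin d), t ≠ 0 →
        ‖∫ x, Complex.exp ((((-2) * Real.pi * (inner ℝ t x : ℝ) : ℝ) : ℂ) * Complex.I) * φ x ∂μ‖
          ≤ C * ‖t‖ ^ (-(β / 2)))
    (hgap : 1 / α - 1 / β > 1 / (d : ℝ)) :
    ¬ HasFourierFrame μ := by
  rintro ⟨Λ, hΛ, A, B, hA, hAB, hframe⟩
  obtain ⟨φ, hφ, hφpos, hφdecay⟩ := hdecay
  have : Countable Λ := hΛ.to_subtype
  have hd : (0 : ℝ) < d := hα0.trans_le hαd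
  have : Nontrivial (EuclideanSpace ℝ (Fin d)) :=
    Module.nontrivial_of_finrank_pos (R := ℝ) (by simpa using hd)
  have hαβ : α < β := (one_div_lt_one_div hβ0 hα0).1 (by linarith [one_div_pos.2 hd])
  have hαd' : α < d := (one_div_lt_one_div hd hα0).1 (by linarith [one_div_pos.2 hβ0])
  obtain ⟨γ, hαγ, hγβ, hγd⟩ : ∃ γ, α < γ ∧ γ ≤ β ∧ γ < d :=
    ⟨(α + min β d) / 2, by linarith [lt_min hαβ hαd'], by linarith [min_le_left β d],
      by linarith [min_le_right β d, lt_min hαβ hαd']⟩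
  have hμ : μ ≠ 0 := by rintro rfl; simp at hφpos
  obtain ⟨c, hc, r₀, hr₀, henergy⟩ := exists_ofReal_mul_rpow_le_lintegral_fourierM hlim
  obtain ⟨K, hK, hcount⟩ := exists_countInBall_le
    ((continuous_fourierM μ).measurable.enorm.pow_const 2)
    (mul_nonneg (hA.le.trans hAB) measureReal_nonneg) _ (hframe.tsum_enorm_sq_fourierM_le hμ hA)
    hc hr₀ (by simpa using henergy)
  exact not_forall_le_tsum_comp_sub hK hr₀ hcount
    ((continuous_fourierIntegral_inner (hφ.integrable one_le_two)).measurable.enorm.pow_const 2)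
    (by positivity) (by linarith) hαγ (by simpa using hγd)
    (enorm_sq_fourierIntegral_le hφdecay (by linarith) hγβ) (mul_pos hA hφpos)
    fun t => (hframe.translate_bounds hφ (mul_pos hA hφpos) t).1

/-- Theorem 3.1 (pure type principle): if `μ` satisfies the lower Fourier-energy condition
with exponent `α` and admits a nonzero density `φ` with Fourier decay of order `β/2`,
and `1/α − 1/β > 1/d`, then `L²(μ)` admits no Fourier frame. -/
theorem no_fourier_frame_of_mixed_dimensions {d : ℕ}
    (μ : Measure (EuclideanSpace ℝ (Fin d))) [IsFiniteMeasure μ]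
    (α β : ℝ) (hα0 : 0 < α) (hαd : α ≤ (d : ℝ)) (hβ0 : 0 < β) (hβd : β ≤ (d : ℝ))
    (hlim : 0 < Filter.liminf (fun r : ℝ =>
      r ^ (α - (d : ℝ)) * ∫ t in Metric.ball (0 : EuclideanSpace ℝ (Fin d)) r,
        ‖fourierM μ t‖ ^ 2) Filter.atTop)
    (C : ℝ)
    (hdecay : ∃ φ : EuclideanSpace ℝ (Fin d) → ℂ, MeasureTheory.MemLp φ 2 μ ∧
      (0 < ∫ x, ‖φ x‖ ^ 2 ∂μ) ∧
      ∀ t : EuclideanSpace ℝ (Fin d), t ≠ 0 →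
        ‖∫ x, Complex.exp ((((-2) * Real.pi * (inner ℝ t x : ℝ) : ℝ) : ℂ) * Complex.I) * φ x ∂μ‖
          ≤ C * ‖t‖ ^ (-(β / 2)))
    (hgap : 1 / α - 1 / β > 1 / (d : ℝ)) :
    ¬ HasFourierFrame μ :=
  no_fourier_frame_of_mixed_dimensions_general μ α β hα0 hαd hβ0 hlim C hdecay hgap
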